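/- arXiv:1107.4832 — 3 statements merged into one kernel-verified Lean document; each statement's English description precedes it below -/
import Mathlib

section
/- Let A = {τ₁ < τ₂ < … < τₘ} be a finite subset of ℕ and define dist(A) = ∏_{j=1}^{m-1} (1 + |τ_{j+1} − τ_j|). For any spanning tree 𝒯 on the vertex set A with edge set E(𝒯), one has dist(A) ≤ ∏_{{τ,τ'} ∈ E(𝒯)} (1 + |τ' − τ|). -/
/-!
Remove a leaf `v` of the tree, with neighbour `u`, and induct. The inductive step is the
inequality `dist(B) ≤ (1 + |u - b|) · dist(B \ {b})` for distinct `b, u ∈ B`: deleting `b`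
replaces the one or two gaps at `b` by their union; the gap on the side of `u` is at most
`|u - b|`, and the gap on the other side is at most the merged gap.
-/

/-- Weight of an (unordered) edge {a,b}: 1 + |b - a|. -/
noncomputable def edgeWeight : Sym2 ℕ → ℝ :=
  Sym2.lift ⟨fun a b => 1 + |(b : ℝ) - (a : ℝ)|, fun a b => by simp [abs_sub_comm]⟩

/-- dist(A) = product of (1 + |τ_{j+1} - τ_j|) over consecutive elements of A
in increasing order. -/
noncomputable def distA (A : Finset ℕ) : ℝ :=
  (List.zipWith (fun a b : ℕ => 1 + |(b : ℝ) - (a : ℝ)|)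
    (A.sort (· ≤ ·)) (A.sort (· ≤ ·)).tail).prod

noncomputable def weight (a b : ℕ) : ℝ := 1 + |(b : ℝ) - a|

lemma edgeWeight_mk (a b : ℕ) : edgeWeight s(a, b) = weight a b := rfl

lemma weight_comm (a b : ℕ) : weight a b = weight b a := by
  simp only [weight, abs_sub_comm]

lemma one_le_weight (a b : ℕ) : 1 ≤ weight a b := by
  simp [weight]

lemma weight_nonneg (a b : ℕ) : 0 ≤ weight a b := zero_le_one.trans (one_le_weight a b)

lemma one_le_edgeWeight (e : Sym2 ℕ) : 1 ≤ edgeWeight e := by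
  induction e using Sym2.ind with
  | _ a b => exact one_le_weight a b

lemma weight_of_le {a b : ℕ} (h : a ≤ b) : weight a b = 1 + ((b : ℝ) - a) := by
  rw [weight, abs_of_nonneg (sub_nonneg.mpr (Nat.cast_le.mpr h))]

lemma weight_le_weight_right {a b c : ℕ} (hab : a ≤ b) (hbc : b ≤ c) :
    weight a b ≤ weight a c := by
  rw [weight_of_le hab, weight_of_le (hab.trans hbc)]
  have : (b : ℝ) ≤ c := by exact_mod_cast hbc
  linarith

lemma weight_le_weight_left {a b c : ℕ} (hab : a ≤ b) (hbc : b ≤ c) :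
    weight b c ≤ weight a c := by
  rw [weight_of_le hbc, weight_of_le (hab.trans hbc)]
  have : (a : ℝ) ≤ b := by exact_mod_cast hab
  linarith

lemma weight_mul_weight_le {a b c u : ℕ} (hab : a ≤ b) (hbc : b ≤ c) (hu : u ≤ a ∨ c ≤ u) :
    weight a b * weight b c ≤ weight b u * weight a c := by
  rcases hu with hua | hcu
  · rw [weight_comm b u]
    exact mul_le_mul (weight_le_weight_left hua hab) (weight_le_weight_left hab hbc)
      (weight_nonneg b c) (weight_nonneg u b)
  · rw [mul_comm]
    exact mul_le_mul (weight_le_weight_right hbc hcu) (weight_le_weight_right hab hbc)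
      (weight_nonneg a b) (weight_nonneg b u)

noncomputable def distList (l : List ℕ) : ℝ := (List.zipWith weight l l.tail).prod

lemma distA_eq_distList_sort (A : Finset ℕ) : distA A = distList (A.sort (· ≤ ·)) := rfl

@[simp] lemma distList_singleton (a : ℕ) : distList [a] = 1 := rfl

@[simp] lemma distList_cons_cons (a b : ℕ) (l : List ℕ) :
    distList (a :: b :: l) = weight a b * distList (b :: l) := rfl

lemma distList_eq_one_of_length_le_one : ∀ {l : List ℕ}, l.length ≤ 1 → distList l = 1
  | [], _ | [_], _ => rfl

lemma distA_eq_one_of_card_le_one {B : Finset ℕ} (hB : B.card ≤ 1) : distA B = 1 :=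
  distList_eq_one_of_length_le_one ((B.length_sort (· ≤ ·)).trans_le hB)

lemma distList_nonneg : ∀ l : List ℕ, 0 ≤ distList l
  | [] | [_] => zero_le_one
  | a :: b :: l => by
    rw [distList_cons_cons]
    exact mul_nonneg (weight_nonneg a b) (distList_nonneg (b :: l))

lemma distList_append_cons (l₁ : List ℕ) (a : ℕ) (l₂ : List ℕ) :
    distList (l₁ ++ a :: l₂) = distList (l₁ ++ [a]) * distList (a :: l₂) := by
  induction l₁ with
  | nil => simp
  | cons x t ih =>
    cases t with
    | nil => cases l₂ <;> simp
    | cons y t => simp only [List.cons_append, distList_cons_cons] at ih ⊢; rw [ih, mul_assoc]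

lemma distList_le_weight_mul_distList_append (l₁ l₂ : List ℕ) {b u : ℕ}
    (hl : (l₁ ++ b :: l₂).Pairwise (· < ·)) (hu : u ∈ l₁ ++ l₂) :
    distList (l₁ ++ b :: l₂) ≤ weight b u * distList (l₁ ++ l₂) := by
  obtain ⟨hl₁, hbl₂, hl₁b⟩ := List.pairwise_append.mp hl
  obtain ⟨hb, hl₂⟩ := List.pairwise_cons.mp hbl₂
  rcases List.eq_nil_or_concat l₁ with rfl | ⟨t, a, rfl⟩
  · cases l₂ with
    | nil => simp at hu
    | cons c r =>
      have hcu : c ≤ u := by grind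
      simp only [List.nil_append, distList_cons_cons]
      exact mul_le_mul_of_nonneg_right (weight_le_weight_right (hb c (by simp)).le hcu)
        (distList_nonneg _)
  · rw [List.concat_eq_append] at hl₁ hl₁b hu ⊢
    have hab : a < b := hl₁b a (by simp) b (by simp)
    have hua : u ∈ t ++ [a] → u ≤ a := by grind
    cases l₂ with
    | nil =>
      have hwu : weight a b ≤ weight b u :=
        weight_comm u b ▸ weight_le_weight_left (hua (by simpa using hu)) hab.le
      rw [List.append_assoc, List.singleton_append, distList_append_cons, List.append_nil]
      simpa [mul_comm] using mul_le_mul_of_nonneg_left hwu (distList_nonneg (t ++ [a]))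
    | cons c r =>
      have hcu : u ∈ c :: r → c ≤ u := by grind
      have hwu : weight a b * weight b c ≤ weight b u * weight a c :=
        weight_mul_weight_le hab.le (hb c (by simp)).le
          ((List.mem_append.mp hu).imp hua hcu)
      simp only [List.append_assoc, List.cons_append, List.nil_append]
      rw [distList_append_cons t a (b :: c :: r), distList_append_cons t a (c :: r),
        distList_cons_cons, distList_cons_cons, distList_cons_cons]
      calc distList (t ++ [a]) * (weight a b * (weight b c * distList (c :: r)))
          = (weight a b * weight b c) * (distList (t ++ [a]) * distList (c :: r)) := by ring
        _ ≤ (weight b u * weight a c) * (distList (t ++ [a]) * distList (c :: r)) :=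
          mul_le_mul_of_nonneg_right hwu (mul_nonneg (distList_nonneg _) (distList_nonneg _))
        _ = weight b u * (distList (t ++ [a]) * (weight a c * distList (c :: r))) := by ring

theorem Finset.sort_erase {α : Type*} [DecidableEq α] (r : α → α → Prop) [DecidableRel r]
    [IsTrans α r] [Std.Antisymm r] [Std.Total r] (s : Finset α) (a : α) :
    (s.erase a).sort r = (s.sort r).erase a := by
  have hnd : ((s.sort r).erase a).Nodup := (s.sort_nodup r).erase a
  rw [← (List.toFinset_sort r hnd).mpr ((s.pairwise_sort r).sublist (List.erase_sublist))]
  congr 1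
  ext x
  simp [(s.sort_nodup r).mem_erase_iff]

lemma distA_le_weight_mul_distA_erase {B : Finset ℕ} {b u : ℕ} (hb : b ∈ B) (hu : u ∈ B)
    (hub : u ≠ b) : distA B ≤ weight b u * distA (B.erase b) := by
  obtain ⟨l₁, l₂, hsplit⟩ := List.append_of_mem ((B.mem_sort (· ≤ ·)).mpr hb)
  have hl : (l₁ ++ b :: l₂).Pairwise (· < ·) := hsplit ▸ B.sortedLT_sort.pairwise
  have hb₁ : b ∉ l₁ := fun h => lt_irrefl b ((List.pairwise_append.mp hl).2.2 b h b (by simp))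
  have hu' : u ∈ l₁ ++ l₂ := by
    have := (B.mem_sort (· ≤ ·)).mpr hu
    grind
  rw [distA_eq_distList_sort, distA_eq_distList_sort, Finset.sort_erase, hsplit,
    List.erase_append_right _ hb₁, List.erase_cons_head]
  exact distList_le_weight_mul_distList_append l₁ l₂ hl hu'

theorem SimpleGraph.prod_edgeFinset_eq_mul_prod_induce_compl {V M : Type*} [Fintype V]
    [DecidableEq V] [CommMonoid M] (G : SimpleGraph V) [DecidableRel G.Adj] {v u : V}
    (hvu : G.Adj v u) (hu : ∀ w, G.Adj v w → w = u) (φ : Sym2 V → M) :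
    ∏ e ∈ G.edgeFinset, φ e =
      φ s(v, u) * ∏ e ∈ (G.induce {v}ᶜ).edgeFinset, φ (e.map (↑)) := by
  rw [← Finset.prod_filter_mul_prod_filter_not G.edgeFinset (v ∈ ·)]
  congr 1
  · have : G.edgeFinset.filter (v ∈ ·) = {s(v, u)} := by
      ext e
      induction e using Sym2.ind with
      | _ x y =>
        simp only [Finset.mem_filter, mem_edgeFinset, mem_edgeSet, Sym2.mem_iff,
          Finset.mem_singleton, Sym2.eq_iff]
        grind [G.adj_comm]
    rw [this, Finset.prod_singleton]
  · refine Eq.trans ?_ (Finset.prod_map _ (Function.Embedding.subtype _).sym2Map φ)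
    rw [map_edgeFinset_induce]
    congr 1
    ext e
    simp only [Finset.mem_filter, Finset.mem_inter, Finset.mem_sym2_iff, Set.mem_toFinset,
      Set.mem_compl_singleton_iff]
    grind

theorem distA_image_le_prod_edgeFinset {V : Type*} [Fintype V] (G : SimpleGraph V)
    [DecidableRel G.Adj] (hG : G.IsTree) {f : V → ℕ} (hf : f.Injective) :
    distA (Finset.univ.image f) ≤ ∏ e ∈ G.edgeFinset, edgeWeight (e.map f) := by
  classical
  revert G f
  refine Fintype.induction_subsingleton_or_nontrivial (P := fun V _ => ∀ (G : SimpleGraph V)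
    [DecidableRel G.Adj], G.IsTree → ∀ {f : V → ℕ}, f.Injective →
      distA (Finset.univ.image f) ≤ ∏ e ∈ G.edgeFinset, edgeWeight (e.map f)) V ?_ ?_
  · intro V _ _ G _ _ f _
    rw [distA_eq_one_of_card_le_one
      (Finset.card_image_le.trans (Finset.card_le_one_of_subsingleton _))]
    exact Finset.one_le_prod fun e _ => one_le_edgeWeight _
  · intro V _ _ ih G _ hG f hf
    obtain ⟨v, hv⟩ := hG.exists_vert_degree_one_of_nontrivial
    obtain ⟨u, hvu, hu⟩ := SimpleGraph.degree_eq_one_iff_existsUnique_adj.mp hv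
    have hG' : (G.induce {v}ᶜ).IsTree :=
      ⟨hG.connected.induce_compl_singleton_of_degree_eq_one hv, hG.isAcyclic.induce _⟩
    have hcard : Fintype.card ({v}ᶜ : Set V) < Fintype.card V :=
      Fintype.card_subtype_lt (x := v) (by simp)
    have himage : Finset.univ.image (f ∘ ((↑) : ({v}ᶜ : Set V) → V)) =
        (Finset.univ.image f).erase (f v) := by
      ext x
      simp only [Finset.mem_image, Finset.mem_univ, Function.comp_apply, true_and,
        Subtype.exists, Set.mem_compl_iff, Set.mem_singleton_iff, exists_prop, Finset.mem_erase]
      grind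
    calc distA (Finset.univ.image f)
        ≤ weight (f v) (f u) * distA ((Finset.univ.image f).erase (f v)) :=
          distA_le_weight_mul_distA_erase (by simp) (by simp) (hf.ne hvu.ne')
      _ ≤ weight (f v) (f u) * ∏ e ∈ (G.induce {v}ᶜ).edgeFinset,
            edgeWeight ((e.map (↑)).map f) := by
          rw [← himage]
          gcongr
          · exact weight_nonneg _ _
          · simpa only [Sym2.map_map] using ih _ hcard _ hG' (hf.comp Subtype.val_injective)
      _ = ∏ e ∈ G.edgeFinset, edgeWeight (e.map f) := by
          rw [G.prod_edgeFinset_eq_mul_prod_induce_compl hvu hu, Sym2.map_mk, edgeWeight_mk]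

/-- For any spanning tree on the vertex set A,
dist(A) ≤ ∏_{{τ,τ'} ∈ E(𝒯)} (1 + |τ' - τ|). -/
theorem stmt0 (A : Finset ℕ) (G : SimpleGraph A) [DecidableRel G.Adj]
    (hT : G.IsTree) :
    distA A ≤ ∏ e ∈ G.edgeFinset, edgeWeight (Sym2.map (fun x : A => (x : ℕ)) e) := by
  simpa using distA_image_le_prod_edgeFinset G hT Subtype.val_injective
end

section
/- Let q(t) = λ⁴ ∫∫∫∫_{0<u<u'<v<t, u'<v'<t} h(v−u) h(v'−u') du du' dv dv', where h : ℝ₊ → ℝ₊ satisfies ∫₀^∞ h(s) ds = H < ∞ and ∫₀^∞ s^α h(s) ds = M_α < ∞ for some 0 < α ≤ 1. Then for all t > 0, q(t) ≤ H M_α λ⁴ t^{2−α}. -/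
open MeasureTheory Set ENNReal

namespace Stmt11Aux

lemma pre_sub (a b u : ℝ) : (fun x : ℝ => x - u) ⁻¹' Ioc (a - u) (b - u) = Ioc a b := by
  ext x
  simp only [mem_preimage, mem_Ioc, sub_lt_sub_iff_right, sub_le_sub_iff_right]

lemma emb_sub (u : ℝ) : MeasurableEmbedding (fun x : ℝ => x - u) :=
  (MeasurableEquiv.subRight u).measurableEmbedding

lemma mp_sub (u : ℝ) : MeasurePreserving (fun x : ℝ => x - u) volume volume :=
  measurePreserving_sub_right volume u

lemma lint_shift (g : ℝ → ℝ≥0∞) (a b u : ℝ) :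
    ∫⁻ x in Ioc a b, g (x - u) = ∫⁻ y in Ioc (a - u) (b - u), g y := by
  rw [← pre_sub a b u]
  exact (mp_sub u).setLIntegral_comp_preimage_emb (emb_sub u) g _

lemma int_shift (f : ℝ → ℝ) (a b u : ℝ) :
    ∫ x in Ioc a b, f (x - u) = ∫ y in Ioc (a - u) (b - u), f y := by
  rw [← pre_sub a b u]
  exact (mp_sub u).setIntegral_preimage_emb (emb_sub u) f _

lemma intOn_shift {f : ℝ → ℝ} {a b : ℝ} (u : ℝ) (hf : IntegrableOn f (Ioc (a - u) (b - u))) :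
    IntegrableOn (fun x => f (x - u)) (Ioc a b) := by
  rw [← pre_sub a b u]
  exact ((mp_sub u).integrableOn_comp_preimage (emb_sub u)).mpr hf

end Stmt11Aux

open Stmt11Aux in
/-- If ∫₀^∞ h = H and ∫₀^∞ s^α h(s) ds = M_α with h ≥ 0 and 0 < α ≤ 1, then
q(t) = λ⁴ ∫∫∫∫_{0<u<u'<v<t, u'<v'<t} h(v−u) h(v'−u') ≤ H M_α λ⁴ t^{2−α}. -/
theorem stmt11 (h : ℝ → ℝ) (hmeas : Measurable h) (hpos : ∀ s, 0 ≤ h s)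
    (α H M : ℝ) (hα0 : 0 < α) (hα1 : α ≤ 1)
    (hint1 : IntegrableOn h (Set.Ioi 0))
    (hint2 : IntegrableOn (fun s => s ^ α * h s) (Set.Ioi 0))
    (hH : ∫ s in Set.Ioi (0:ℝ), h s = H)
    (hM : ∫ s in Set.Ioi (0:ℝ), s ^ α * h s = M)
    (lam t : ℝ) (ht : 0 < t) :
    lam ^ 4 *
      ∫ u in Set.Ioc (0:ℝ) t, ∫ u' in Set.Ioc u t, ∫ v in Set.Ioc u' t,
        ∫ v' in Set.Ioc u' t, h (v - u) * h (v' - u')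
    ≤ H * M * lam ^ 4 * t ^ (2 - α) := by
  have hH0 : 0 ≤ H := by
    rw [← hH]; exact setIntegral_nonneg measurableSet_Ioi fun s _ => hpos s
  have hM0 : 0 ≤ M := by
    rw [← hM]
    exact setIntegral_nonneg measurableSet_Ioi fun s hs =>
      mul_nonneg (Real.rpow_nonneg hs.le α) (hpos s)
  set c : ℝ → ℝ≥0∞ := fun s => ENNReal.ofReal (h s) with hc
  have hcm : Measurable c := ENNReal.measurable_ofReal.comp hmeas
  -- tail bound
  have tail1 : ∀ a b : ℝ, 0 ≤ a → ∫ x in Ioc a b, h x ≤ H := by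
    intro a b ha
    rw [← hH]
    refine setIntegral_mono_set hint1 (Filter.Eventually.of_forall fun x => hpos x) ?_
    exact HasSubset.Subset.eventuallyLE fun x hx => lt_of_le_of_lt ha hx.1
  have hIsub : ∀ a b : ℝ, 0 ≤ a → IntegrableOn h (Ioc a b) :=
    fun a b ha => hint1.mono_set fun x hx => lt_of_le_of_lt ha hx.1
  have hIshift : ∀ u a b : ℝ, 0 ≤ a - u → IntegrableOn (fun x => h (x - u)) (Ioc a b) :=
    fun u a b ha => Stmt11Aux.intOn_shift u (hIsub _ _ ha)
  -- the cumulative function Z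
  set Z : ℝ → ℝ := fun x => ∫ s in Ioc 0 x, h s with hZdef
  have hZ0 : ∀ x, 0 ≤ Z x := fun x => setIntegral_nonneg measurableSet_Ioc fun s _ => hpos s
  have hZH : ∀ x, Z x ≤ H := fun x => tail1 0 x le_rfl
  have hZmono : Monotone Z := by
    intro x y hxy
    exact setIntegral_mono_set (hIsub 0 y le_rfl)
      (Filter.Eventually.of_forall fun s => hpos s)
      (HasSubset.Subset.eventuallyLE (Ioc_subset_Ioc_right hxy))
  have hZsplit : ∀ x y : ℝ, 0 ≤ x → x ≤ y → ∫ s in Ioc x y, h s = Z y - Z x := by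
    intro x y hx hxy
    have hzy : Z y = Z x + ∫ s in Ioc x y, h s := by
      have := setIntegral_union (Ioc_disjoint_Ioc_of_le (a := (0:ℝ)) (b := x) (c := x) (d := y) le_rfl)
        measurableSet_Ioc (hIsub 0 x le_rfl) (hIsub x y hx)
      rw [Ioc_union_Ioc_eq_Ioc hx hxy] at this
      exact this
    linarith
  -- innermost bound
  have inner1 : ∀ u' : ℝ, 0 ≤ u' → ∫ v' in Ioc u' t, h (v' - u') ≤ H := by
    intro u' hu'
    have := Stmt11Aux.int_shift h u' t u'
    rw [sub_self] at this
    rw [this]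
    exact tail1 0 (t - u') le_rfl
  -- v-level bound
  have lev2 : ∀ u u' : ℝ, 0 < u → u < u' →
      ∫ v in Ioc u' t, ∫ v' in Ioc u' t, h (v - u) * h (v' - u')
        ≤ H * ∫ v in Ioc u' t, h (v - u) := by
    intro u u' hu huu'
    have hub : IntegrableOn (fun v => h (v - u)) (Ioc u' t) :=
      hIshift u u' t (by linarith)
    calc ∫ v in Ioc u' t, ∫ v' in Ioc u' t, h (v - u) * h (v' - u')
        ≤ ∫ v in Ioc u' t, h (v - u) * H := by
          refine integral_mono_of_nonneg
            (Filter.Eventually.of_forall fun v =>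
              integral_nonneg fun v' => mul_nonneg (hpos _) (hpos _))
            (hub.mul_const H)
            (Filter.Eventually.of_forall fun v => ?_)
          show (∫ v' in Ioc u' t, h (v - u) * h (v' - u')) ≤ h (v - u) * H
          rw [integral_const_mul]
          exact mul_le_mul_of_nonneg_left (inner1 u' (by linarith)) (hpos _)
      _ = H * ∫ v in Ioc u' t, h (v - u) := by rw [integral_mul_const, mul_comm]
  -- Fubini at the u'-level
  have keyFubini : ∀ u : ℝ, 0 < u → u ≤ t →
      ∫ u' in Ioc u t, (Z (t - u) - Z (u' - u)) ≤ t ^ (1 - α) * M := by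
    intro u hu hut
    have hmono' : Monotone fun u' : ℝ => Z (u' - u) :=
      fun a b hab => hZmono (by linarith)
    have hmeas' : Measurable fun u' : ℝ => Z (t - u) - Z (u' - u) :=
      measurable_const.sub hmono'.measurable
    have hbound : 0 ≤ t ^ (1 - α) * M :=
      mul_nonneg (Real.rpow_nonneg ht.le _) hM0
    -- convert to lintegral
    rw [integral_eq_lintegral_of_nonneg_ae
      ((ae_restrict_iff' measurableSet_Ioc).mpr (Filter.Eventually.of_forall
        fun u' hu' => sub_nonneg.mpr (hZmono (by linarith [hu'.2]))))
      hmeas'.aestronglyMeasurable]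
    refine ENNReal.toReal_le_of_le_ofReal hbound ?_
    have step1 : ∫⁻ u' in Ioc u t, ENNReal.ofReal (Z (t - u) - Z (u' - u))
        = ∫⁻ u' in Ioc u t, ∫⁻ v in Ioc u' t, c (v - u) := by
      refine setLIntegral_congr_fun measurableSet_Ioc
        (fun u' hu' => ?_)
      have e1 : ∫ v in Ioc u' t, h (v - u) = Z (t - u) - Z (u' - u) := by
        rw [Stmt11Aux.int_shift h u' t u, hZsplit (u' - u) (t - u)
          (by linarith [hu'.1]) (by linarith [hu'.2])]
      rw [← e1, ofReal_integral_eq_lintegral_ofReal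
        (hIshift u u' t (by linarith [hu'.1]))
        (Filter.Eventually.of_forall fun v => hpos _)]
    rw [step1]
    -- Fubini
    set Φ : ℝ × ℝ → ℝ≥0∞ :=
      fun p => indicator {q : ℝ × ℝ | q.1 < q.2} (fun q => c (q.2 - u)) p with hΦdef
    have hΦm : Measurable Φ :=
      Measurable.indicator (hcm.comp (measurable_snd.sub measurable_const))
        (measurableSet_lt measurable_fst measurable_snd)
    have eq1 : ∫⁻ u' in Ioc u t, ∫⁻ v in Ioc u' t, c (v - u)
        = ∫⁻ u' in Ioc u t, ∫⁻ v in Ioc u t, Φ (u', v) := by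
      refine setLIntegral_congr_fun measurableSet_Ioc
        (fun u' hu' => ?_)
      have hfun : (fun v => Φ (u', v)) = indicator (Ioi u') fun v => c (v - u) := by
        ext v
        by_cases hv : u' < v <;> simp [hΦdef, indicator, hv]
      have hset : Ioi u' ∩ Ioc u t = Ioc u' t := by
        ext x
        simp only [mem_inter_iff, mem_Ioi, mem_Ioc]
        constructor
        · rintro ⟨h1, _, h3⟩; exact ⟨h1, h3⟩
        · rintro ⟨h1, h2⟩; exact ⟨h1, lt_trans hu'.1 h1, h2⟩
      rw [hfun, lintegral_indicator measurableSet_Ioi,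
        Measure.restrict_restrict measurableSet_Ioi, hset]
    have eq2 : ∫⁻ u' in Ioc u t, ∫⁻ v in Ioc u t, Φ (u', v)
        = ∫⁻ v in Ioc u t, ∫⁻ u' in Ioc u t, Φ (u', v) :=
      lintegral_lintegral_swap hΦm.aemeasurable
    have eq3 : ∫⁻ v in Ioc u t, ∫⁻ u' in Ioc u t, Φ (u', v)
        = ∫⁻ v in Ioc u t, c (v - u) * ENNReal.ofReal (v - u) := by
      refine setLIntegral_congr_fun measurableSet_Ioc
        (fun v hv => ?_)
      have hfun : (fun u' => Φ (u', v)) = indicator (Iio v) fun _ => c (v - u) := by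
        ext u'
        by_cases hv' : u' < v <;> simp [hΦdef, indicator, hv']
      rw [hfun, lintegral_indicator measurableSet_Iio,
        Measure.restrict_restrict measurableSet_Iio, setLIntegral_const]
      have : Iio v ∩ Ioc u t = Ioo u v := by
        ext x
        simp only [mem_inter_iff, mem_Iio, mem_Ioc, mem_Ioo]
        constructor
        · rintro ⟨h1, h2, _⟩; exact ⟨h2, h1⟩
        · rintro ⟨h1, h2⟩; exact ⟨h2, h1, le_trans h2.le hv.2⟩
      rw [this, Real.volume_Ioo]
    have eq4 : ∫⁻ v in Ioc u t, c (v - u) * ENNReal.ofReal (v - u)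
        = ∫⁻ w in Ioc 0 (t - u), c w * ENNReal.ofReal w := by
      have := Stmt11Aux.lint_shift (fun w => c w * ENNReal.ofReal w) u t u
      rw [sub_self] at this
      exact this
    rw [eq1, eq2, eq3, eq4]
    -- pointwise bound and tail
    have hrpm : Measurable fun w : ℝ => ENNReal.ofReal (t ^ (1 - α) * (w ^ α * h w)) :=
      ENNReal.measurable_ofReal.comp (measurable_const.mul
        (((Real.continuous_rpow_const hα0.le).measurable).mul hmeas))
    calc ∫⁻ w in Ioc 0 (t - u), c w * ENNReal.ofReal w
        ≤ ∫⁻ w in Ioc 0 (t - u), ENNReal.ofReal (t ^ (1 - α) * (w ^ α * h w)) := by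
          refine setLIntegral_mono hrpm fun w hw => ?_
          have hw0 : 0 < w := hw.1
          have hwt : w ≤ t := le_trans hw.2 (by linarith)
          rw [hc]
          rw [← ENNReal.ofReal_mul (hpos w)]
          refine ENNReal.ofReal_le_ofReal ?_
          have hsplit : w ^ α * w ^ (1 - α) = w := by
            rw [← Real.rpow_add hw0]
            norm_num
          calc h w * w = h w * (w ^ α * w ^ (1 - α)) := by rw [hsplit]
            _ ≤ h w * (w ^ α * t ^ (1 - α)) := by
                refine mul_le_mul_of_nonneg_left (mul_le_mul_of_nonneg_left
                  (Real.rpow_le_rpow hw0.le hwt (by linarith)) (Real.rpow_nonneg hw0.le _))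
                  (hpos w)
            _ = t ^ (1 - α) * (w ^ α * h w) := by ring
      _ = ENNReal.ofReal (t ^ (1 - α)) * ∫⁻ w in Ioc 0 (t - u), ENNReal.ofReal (w ^ α * h w) := by
          simp_rw [ENNReal.ofReal_mul (Real.rpow_nonneg ht.le (1 - α))]
          rw [lintegral_const_mul' _ _ ENNReal.ofReal_ne_top]
      _ ≤ ENNReal.ofReal (t ^ (1 - α)) * ENNReal.ofReal M := by
          refine mul_le_mul_right ?_ _
          rw [← hM, ofReal_integral_eq_lintegral_ofReal hint2
            ((ae_restrict_iff' measurableSet_Ioi).mpr (Filter.Eventually.of_forall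
              fun s hs => mul_nonneg (Real.rpow_nonneg hs.le α) (hpos s)))]
          exact lintegral_mono_set fun x hx => hx.1
      _ = ENNReal.ofReal (t ^ (1 - α) * M) :=
          (ENNReal.ofReal_mul (Real.rpow_nonneg ht.le _)).symm
  -- u'-level bound
  have levU : ∀ u : ℝ, u ∈ Ioc (0:ℝ) t →
      ∫ u' in Ioc u t, ∫ v in Ioc u' t, ∫ v' in Ioc u' t, h (v - u) * h (v' - u')
        ≤ H * (t ^ (1 - α) * M) := by
    intro u hu
    have hmono' : Monotone fun u' : ℝ => Z (u' - u) :=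
      fun a b hab => hZmono (by linarith)
    have hg : IntegrableOn (fun u' => H * (Z (t - u) - Z (u' - u))) (Ioc u t) := by
      refine Measure.integrableOn_of_bounded (M := H * H) measure_Ioc_lt_top.ne
        ((measurable_const.sub hmono'.measurable).const_mul H).aestronglyMeasurable
        (Filter.Eventually.of_forall fun u' => ?_)
      rw [Real.norm_eq_abs, abs_mul, abs_of_nonneg hH0]
      refine mul_le_mul_of_nonneg_left ?_ hH0
      rw [abs_sub_le_iff]
      constructor <;> [skip; skip] <;>
        [linarith [hZ0 (u' - u), hZH (t - u)]; linarith [hZ0 (t - u), hZH (u' - u)]]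
    calc ∫ u' in Ioc u t, ∫ v in Ioc u' t, ∫ v' in Ioc u' t, h (v - u) * h (v' - u')
        ≤ ∫ u' in Ioc u t, H * (Z (t - u) - Z (u' - u)) := by
          refine integral_mono_of_nonneg
            (Filter.Eventually.of_forall fun u' => integral_nonneg fun v =>
              integral_nonneg fun v' => mul_nonneg (hpos _) (hpos _))
            hg
            ((ae_restrict_iff' measurableSet_Ioc).mpr
              (Filter.Eventually.of_forall fun u' hu' => ?_))
          have e1 : ∫ v in Ioc u' t, h (v - u) = Z (t - u) - Z (u' - u) := by
            rw [Stmt11Aux.int_shift h u' t u, hZsplit (u' - u) (t - u)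
              (by linarith [hu'.1]) (by linarith [hu'.2])]
          calc ∫ v in Ioc u' t, ∫ v' in Ioc u' t, h (v - u) * h (v' - u')
              ≤ H * ∫ v in Ioc u' t, h (v - u) := lev2 u u' hu.1 hu'.1
            _ = H * (Z (t - u) - Z (u' - u)) := by rw [e1]
      _ = H * ∫ u' in Ioc u t, (Z (t - u) - Z (u' - u)) := integral_const_mul H _
      _ ≤ H * (t ^ (1 - α) * M) :=
          mul_le_mul_of_nonneg_left (keyFubini u hu.1 hu.2) hH0
  -- u-level
  have final : ∫ u in Ioc (0:ℝ) t, ∫ u' in Ioc u t, ∫ v in Ioc u' t,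
      ∫ v' in Ioc u' t, h (v - u) * h (v' - u') ≤ H * (t ^ (1 - α) * M) * t := by
    calc ∫ u in Ioc (0:ℝ) t, ∫ u' in Ioc u t, ∫ v in Ioc u' t,
        ∫ v' in Ioc u' t, h (v - u) * h (v' - u')
        ≤ ∫ _u in Ioc (0:ℝ) t, H * (t ^ (1 - α) * M) :=
          integral_mono_of_nonneg
            (Filter.Eventually.of_forall fun u => integral_nonneg fun u' =>
              integral_nonneg fun v => integral_nonneg fun v' =>
                mul_nonneg (hpos _) (hpos _))
            (integrableOn_const measure_Ioc_lt_top.ne)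
            ((ae_restrict_iff' measurableSet_Ioc).mpr
              (Filter.Eventually.of_forall fun u hu => levU u hu))
      _ = H * (t ^ (1 - α) * M) * t := by
          rw [setIntegral_const, Real.volume_real_Ioc_of_le ht.le, smul_eq_mul, sub_zero,
            mul_comm]
  have hrw : H * M * lam ^ 4 * t ^ (2 - α) = lam ^ 4 * (H * (t ^ (1 - α) * M) * t) := by
    have h2 : t ^ (2 - α) = t ^ (1 - α) * t := by
      rw [show (2 - α : ℝ) = (1 - α) + 1 by ring, Real.rpow_add ht, Real.rpow_one]
    rw [h2]; ring
  rw [hrw]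
  exact mul_le_mul_of_nonneg_left final (by positivity)
end

section
/- Let α > 0 and let h : ℕ² → ℝ₊ satisfy: (i) h(τ₁+t, τ₂+t) = h(τ₁,τ₂) for all t, and (ii) ∑_{τ₂ > τ₁} h(τ₁, τ₂) ≤ 1 for each fixed τ₁. Fix an integer ℓ ≥ 2 and partition ℕ into blocks I_{τ'} = {ℓ²(τ'−1)+1, …, ℓ²τ'}. Then ∑_{τ'₁ : τ'₁ < τ'₂ − 1} (1 + τ'₂ − τ'₁)^α ∑_{τ₁ ∈ I_{τ'₁}, τ₂ ∈ I_{τ'₂}} h(τ₁,τ₂)(1+τ₂−τ₁)^{-α} (max I_{τ'₂} − τ₂ + 1)^{-1/2} ≤ C ℓ^{1−2α} for a constant C depending only on α (using that τ₂ − τ₁ ≥ (ℓ²/2)(τ'₂ − τ'₁) in the region τ'₁ < τ'₂ − 1 gives (1+τ'₂−τ'₁)^α ≤ C ℓ^{-2α}(1+τ₂−τ₁)^α). -/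
/-!
For `τ'₁ ≤ τ'₂ - 2` the gap `τ₂ - τ₁` between times in the blocks `I_{τ'₁}`, `I_{τ'₂}` is at least
a third of `ℓ² (1 + τ'₂ - τ'₁)`, so the block weight `(1 + τ'₂ - τ'₁)^α (1 + τ₂ - τ₁)^{-α}` is at
most `(3 / ℓ²)^α`. The blocks `I_{τ'₁}` with `τ'₁ < τ'₂ - 1` tile an interval of times before
`I_{τ'₂}`, and by translation invariance the sum of `h(τ₁, τ₂)` over distinct earlier times `τ₁` is a
sum of `h(0, s)` over distinct `s > 0`, hence at most `1`. What is left is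
`∑_{τ₂ ∈ I_{τ'₂}} (max I_{τ'₂} - τ₂ + 1)^{-1/2} = ∑_{k ≤ ℓ²} k^{-1/2} ≤ 2ℓ`.
-/

open Finset

theorem sum_Icc_rpow_neg_half_le_two_mul_sqrt (n : ℕ) :
    ∑ k ∈ Icc 1 n, (k : ℝ) ^ (-(1 / 2) : ℝ) ≤ 2 * √n := by
  induction n with
  | zero => simp
  | succ n ih =>
    rw [sum_Icc_succ_top (by omega)]
    have hs : 0 < √((n + 1 : ℕ) : ℝ) := Real.sqrt_pos.2 (by positivity)
    have hstep : ((n + 1 : ℕ) : ℝ) ^ (-(1 / 2) : ℝ) ≤ 2 * √((n + 1 : ℕ) : ℝ) - 2 * √n := by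
      rw [Real.rpow_neg (by positivity), ← Real.sqrt_eq_rpow, inv_le_iff_one_le_mul₀' hs]
      have hs2 : √((n + 1 : ℕ) : ℝ) ^ 2 = n + 1 := by
        rw [Real.sq_sqrt (by positivity)]; push_cast; ring
      have ht2 : √(n : ℝ) ^ 2 = n := Real.sq_sqrt (by positivity)
      nlinarith [sq_nonneg (√((n + 1 : ℕ) : ℝ) - √(n : ℝ))]
    linarith

theorem rpow_mul_rpow_neg_le_of_le_mul {a b k α : ℝ} (hα : 0 ≤ α) (ha : 0 ≤ a) (hb : 0 < b)
    (hab : a ≤ k * b) : a ^ α * b ^ (-α) ≤ k ^ α := by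
  rw [Real.rpow_neg hb.le, ← div_eq_mul_inv, ← Real.div_rpow ha hb.le]
  exact Real.rpow_le_rpow (div_nonneg ha hb.le) ((div_le_iff₀ hb).2 hab) hα

theorem sum_le_one_of_translation_invariant {h : ℕ → ℕ → ℝ}
    (hinv : ∀ τ₁ τ₂ t, h (τ₁ + t) (τ₂ + t) = h τ₁ τ₂)
    (hsum : ∀ τ₁ (F : Finset ℕ), ∑ τ₂ ∈ F, (if τ₁ < τ₂ then h τ₁ τ₂ else 0) ≤ 1)
    {τ₂ : ℕ} {F : Finset ℕ} (hF : ∀ τ₁ ∈ F, τ₁ < τ₂) :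
    ∑ τ₁ ∈ F, h τ₁ τ₂ ≤ 1 := by
  have hinj : Set.InjOn (τ₂ - ·) F := fun a ha b hb hab => by
    have := hF a ha; have := hF b hb; simp only at hab; omega
  calc ∑ τ₁ ∈ F, h τ₁ τ₂ = ∑ τ₁ ∈ F, (if 0 < τ₂ - τ₁ then h 0 (τ₂ - τ₁) else 0) := by
        refine sum_congr rfl fun τ₁ hτ₁ => ?_
        rw [if_pos (by have := hF τ₁ hτ₁; omega), ← hinv 0 (τ₂ - τ₁) τ₁, zero_add,
          Nat.sub_add_cancel (hF τ₁ hτ₁).le]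
    _ = ∑ s ∈ F.image (τ₂ - ·), (if 0 < s then h 0 s else 0) := by rw [sum_image hinj]
    _ ≤ 1 := hsum 0 _

/-- The paper's block `I_j = {L (j - 1) + 1, …, L j}`, with `L = ℓ²`. -/
def block (L j : ℕ) : Finset ℕ := Icc (L * (j - 1) + 1) (L * j)

theorem mem_block {L j τ : ℕ} : τ ∈ block L j ↔ L * (j - 1) + 1 ≤ τ ∧ τ ≤ L * j := mem_Icc

theorem block_eq_Ioc (L j : ℕ) : block L j = Ioc (L * (j - 1)) (L * j) :=
  Icc_add_one_left_eq_Ioc _ _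

theorem sum_Ico_sum_block {M : Type*} [AddCommMonoid M] (L m : ℕ) (f : ℕ → M) :
    ∑ j ∈ Ico 1 m, ∑ i ∈ block L j, f i = ∑ i ∈ Ioc 0 (L * (m - 1)), f i := by
  induction m with
  | zero => simp
  | succ m ih =>
    rcases Nat.eq_zero_or_pos m with rfl | hm
    · simp
    rw [sum_Ico_succ_top hm, ih, block_eq_Ioc, Nat.add_sub_cancel]
    exact sum_Ioc_consecutive f (Nat.zero_le _) (Nat.mul_le_mul_left L (Nat.sub_le m 1))

theorem sum_block_rpow_neg_half_le (L j : ℕ) :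
    ∑ τ ∈ block L j, ((L : ℝ) * j - τ + 1) ^ (-(1 / 2) : ℝ) ≤ 2 * √L := by
  rcases j with _ | j
  · simp [block]
  have hreflect : ∑ τ ∈ block L (j + 1), ((L : ℝ) * (j + 1 : ℕ) - τ + 1) ^ (-(1 / 2) : ℝ)
      = ∑ k ∈ Icc 1 L, (k : ℝ) ^ (-(1 / 2) : ℝ) := by
    refine sum_nbij' (fun τ => L * (j + 1) + 1 - τ) (fun k => L * (j + 1) + 1 - k)
      ?_ ?_ ?_ ?_ fun τ hτ => ?_
    all_goals simp only [mem_block, mem_Icc, Nat.add_sub_cancel, mul_add_one] at *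
    iterate 4 intro τ hτ; omega
    rw [Nat.cast_sub (by linarith)]
    push_cast
    ring_nf
  exact hreflect ▸ sum_Icc_rpow_neg_half_le_two_mul_sqrt L

theorem one_add_sub_le_of_mem_block {L j₁ j₂ τ₁ τ₂ : ℕ} (hL : 0 < L) (hj : j₁ + 2 ≤ j₂)
    (hτ₁ : τ₁ ∈ block L j₁) (hτ₂ : τ₂ ∈ block L j₂) :
    1 + (j₂ : ℝ) - j₁ ≤ 3 / L * (1 + (τ₂ : ℝ) - τ₁) := by
  rw [mem_block] at hτ₁ hτ₂
  have hτ₁' : (τ₁ : ℝ) ≤ L * j₁ := by exact_mod_cast hτ₁.2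
  have hτ₂' : (L : ℝ) * (j₂ - 1) + 1 ≤ τ₂ := by
    have := hτ₂.1
    rw [← Nat.cast_le (α := ℝ)] at this
    push_cast [Nat.cast_sub (by omega : 1 ≤ j₂)] at this
    exact this
  have hj' : (j₁ : ℝ) + 2 ≤ j₂ := by exact_mod_cast hj
  -- `τ₂ - τ₁ ≥ L (j₂ - j₁ - 1) + 1` and `j₂ - j₁ ≥ 2`
  rw [div_mul_eq_mul_div, le_div_iff₀ (by positivity)]
  nlinarith [mul_nonneg (Nat.cast_nonneg L : (0 : ℝ) ≤ L) (by linarith : (0 : ℝ) ≤ j₂ - j₁ - 2)]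

theorem rpow_mul_rpow_neg_le_of_mem_block {α : ℝ} (hα : 0 ≤ α) {L j₁ j₂ τ₁ τ₂ : ℕ} (hL : 0 < L)
    (hj : j₁ + 2 ≤ j₂) (hτ₁ : τ₁ ∈ block L j₁) (hτ₂ : τ₂ ∈ block L j₂) :
    (1 + (j₂ : ℝ) - j₁) ^ α * (1 + (τ₂ : ℝ) - τ₁) ^ (-α) ≤ (3 / L) ^ α := by
  have hj' : (j₁ : ℝ) ≤ j₂ := by exact_mod_cast (by omega : j₁ ≤ j₂)
  have hτ : (τ₁ : ℝ) < τ₂ := by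
    have := Nat.mul_le_mul_left L (by omega : j₁ ≤ j₂ - 1)
    exact_mod_cast (by rw [mem_block] at hτ₁ hτ₂; omega : τ₁ < τ₂)
  exact rpow_mul_rpow_neg_le_of_le_mul hα (by linarith) (by linarith)
    (one_add_sub_le_of_mem_block hL hj hτ₁ hτ₂)

theorem sum_Ico_block_weighted_le {α : ℝ} (hα : 0 ≤ α) {L : ℕ} (hL : 0 < L) {h : ℕ → ℕ → ℝ}
    (hpos : ∀ τ₁ τ₂, 0 ≤ h τ₁ τ₂)
    (hinv : ∀ τ₁ τ₂ t, h (τ₁ + t) (τ₂ + t) = h τ₁ τ₂)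
    (hsum : ∀ τ₁ (F : Finset ℕ), ∑ τ₂ ∈ F, (if τ₁ < τ₂ then h τ₁ τ₂ else 0) ≤ 1)
    {j₂ : ℕ} {G : ℕ → ℝ} (hG : ∀ τ₂ ∈ block L j₂, 0 ≤ G τ₂) :
    ∑ j ∈ Ico 1 (j₂ - 1), (1 + (j₂ : ℝ) - j) ^ α *
        ∑ τ₁ ∈ block L j, ∑ τ₂ ∈ block L j₂, h τ₁ τ₂ * (1 + (τ₂ : ℝ) - τ₁) ^ (-α) * G τ₂
      ≤ (3 / L) ^ α * ∑ τ₂ ∈ block L j₂, G τ₂ := by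
  calc _ ≤ ∑ j ∈ Ico 1 (j₂ - 1), ∑ τ₁ ∈ block L j, ∑ τ₂ ∈ block L j₂,
          (3 / L : ℝ) ^ α * (h τ₁ τ₂ * G τ₂) := by
        refine sum_le_sum fun j hj => ?_
        simp_rw [mul_sum]
        refine sum_le_sum fun τ₁ hτ₁ => sum_le_sum fun τ₂ hτ₂ => ?_
        have hweight := rpow_mul_rpow_neg_le_of_mem_block hα hL
          (by simp only [mem_Ico] at hj; omega) hτ₁ hτ₂
        calc _ = ((1 + (j₂ : ℝ) - j) ^ α * (1 + (τ₂ : ℝ) - τ₁) ^ (-α)) * (h τ₁ τ₂ * G τ₂) := by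
              ring
          _ ≤ _ := by gcongr; exact mul_nonneg (hpos _ _) (hG τ₂ hτ₂)
    _ = (3 / L : ℝ) ^ α *
          ∑ τ₂ ∈ block L j₂, (∑ τ₁ ∈ Ioc 0 (L * (j₂ - 1 - 1)), h τ₁ τ₂) * G τ₂ := by
        rw [sum_Ico_sum_block, sum_comm, mul_sum]
        simp only [mul_sum, sum_mul]
    _ ≤ (3 / L : ℝ) ^ α * ∑ τ₂ ∈ block L j₂, G τ₂ := by
        gcongr with τ₂ hτ₂
        refine mul_le_of_le_one_left (hG τ₂ hτ₂) (sum_le_one_of_translation_invariant hinv hsum ?_)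
        intro τ₁ hτ₁
        have := Nat.mul_le_mul_left L (Nat.sub_le (j₂ - 1) 1)
        rw [mem_Ioc] at hτ₁
        rw [mem_block] at hτ₂
        omega

/-- Linear RG two-point sum estimate: for α > 0 there is C = C(α) such that for every
integer ℓ ≥ 2, every nonnegative, time-translation-invariant h with
∑_{τ₂ > τ₁} h(τ₁,τ₂) ≤ 1, and every τ'₂,
∑_{1 ≤ τ'₁ < τ'₂−1} (1+τ'₂−τ'₁)^α ∑_{τ₁ ∈ I_{τ'₁}} ∑_{τ₂ ∈ I_{τ'₂}}
  h(τ₁,τ₂)(1+τ₂−τ₁)^{-α}(max I_{τ'₂} − τ₂ + 1)^{-1/2} ≤ C ℓ^{1−2α},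
where I_{τ'} = {ℓ²(τ'−1)+1, …, ℓ²τ'}. -/
theorem stmt16 (α : ℝ) (hα : 0 < α) :
    ∃ C : ℝ, 0 < C ∧ ∀ (l : ℕ), 2 ≤ l → ∀ (h : ℕ → ℕ → ℝ),
      (∀ τ₁ τ₂, 0 ≤ h τ₁ τ₂) →
      (∀ τ₁ τ₂ t, h (τ₁ + t) (τ₂ + t) = h τ₁ τ₂) →
      (∀ τ₁ (F : Finset ℕ), ∑ τ₂ ∈ F, (if τ₁ < τ₂ then h τ₁ τ₂ else 0) ≤ 1) →
      ∀ τ'₂ : ℕ,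
        ∑ τ'₁ ∈ Finset.Ico 1 (τ'₂ - 1),
          (1 + (τ'₂ : ℝ) - (τ'₁ : ℝ)) ^ α *
            ∑ τ₁ ∈ Finset.Icc (l ^ 2 * (τ'₁ - 1) + 1) (l ^ 2 * τ'₁),
              ∑ τ₂ ∈ Finset.Icc (l ^ 2 * (τ'₂ - 1) + 1) (l ^ 2 * τ'₂),
                h τ₁ τ₂ * (1 + (τ₂ : ℝ) - (τ₁ : ℝ)) ^ (-α) *
                  ((l ^ 2 * τ'₂ : ℝ) - (τ₂ : ℝ) + 1) ^ (-(1/2) : ℝ)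
        ≤ C * (l : ℝ) ^ ((1 : ℝ) - 2 * α) := by
  refine ⟨2 * 3 ^ α, by positivity, fun l hl h hpos hinv hsum τ'₂ => ?_⟩
  have hl0 : (0 : ℝ) < l := by positivity
  have hG : ∀ τ₂ ∈ block (l ^ 2) τ'₂, 0 ≤ ((l : ℝ) ^ 2 * τ'₂ - τ₂ + 1) ^ (-(1 / 2) : ℝ) :=
    fun τ₂ hτ₂ => by
      have : (τ₂ : ℝ) ≤ (l : ℝ) ^ 2 * τ'₂ := by exact_mod_cast (mem_block.1 hτ₂).2
      exact Real.rpow_nonneg (by linarith) _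
  have hGsum := sum_block_rpow_neg_half_le (l ^ 2) τ'₂
  push_cast [Real.sqrt_sq hl0.le] at hGsum
  calc _ ≤ (3 / ((l ^ 2 : ℕ) : ℝ)) ^ α *
          ∑ τ₂ ∈ block (l ^ 2) τ'₂, ((l : ℝ) ^ 2 * τ'₂ - τ₂ + 1) ^ (-(1 / 2) : ℝ) :=
        sum_Ico_block_weighted_le hα.le (by positivity) hpos hinv hsum hG
    _ ≤ (3 / ((l ^ 2 : ℕ) : ℝ)) ^ α * (2 * l) := by gcongr
    _ = 2 * 3 ^ α * l ^ ((1 : ℝ) - 2 * α) := by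
        rw [Nat.cast_pow, Real.div_rpow (by norm_num) (by positivity), Real.rpow_sub hl0,
          Real.rpow_one, ← Real.rpow_natCast_mul hl0.le]
        push_cast
        field_simp
end
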